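/- arXiv:2602.12928 — 9 statements merged into one kernel-verified Lean document; each statement's English description precedes it below -/
import Mathlib

section
/- For a single shelf shuffle of a deck of n cards labeled 1 to n (cards drawn from the bottom of the deck, each placed on top or bottom of the pile independently with probability 1/2), the probability that card i lands in position j equals (C(i-1, j-1) + C(i-1, n-j)) / 2^i, for all 1 ≤ i, j ≤ n, with the convention C(0,0)=1 and C(0,k)=0 for k ≥ 1. -/
/-!
Unrolling the recursion, the shuffled deck lists the cards put on top in increasing order,
followed by the cards put at the bottom in decreasing order. So if card `i` goes on top, it
lands in position `1 + #{c < i | c on top}`, and otherwise in position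
`n - #{c < i | c at the bottom}`; the cards above `i` play no role. Counting the choices for
the `i - 1` cards below `i`, times `2 ^ (n - i)` free choices for the cards above it, gives
`(C(i-1, j-1) + C(i-1, n-j)) * 2 ^ (n - i)` favourable shuffles out of `2 ^ n`.
-/

/-- The pile after `k` cards of a deck of `n` cards have been placed. Cards are
drawn from the bottom of the ordered deck, i.e. in order `n, n-1, …, 1`;
`f c = true` means card `c` is placed on top of the pile, `f c = false` at the
bottom. Position `j` of the shuffled deck is entry `j-1` of the final list. -/
def shelfPile (n : ℕ) (f : ℕ → Bool) : ℕ → List ℕ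
  | 0 => []
  | k + 1 => if f (n - k) then (n - k) :: shelfPile n f k else shelfPile n f k ++ [n - k]

open scoped Finset

namespace List

variable {α : Type*}

theorem getElem?_append_cons_eq_some_iff {l₁ l₂ : List α} {a : α} (h₁ : a ∉ l₁) (h₂ : a ∉ l₂)
    {m : ℕ} : (l₁ ++ a :: l₂)[m]? = some a ↔ m = l₁.length := by
  refine ⟨fun h => ?_, by rintro rfl; simp⟩
  rcases lt_trichotomy m l₁.length with hm | hm | hm
  · rw [getElem?_append_left hm] at h
    exact absurd (mem_of_getElem? h) h₁
  · exact hm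
  · obtain ⟨k, rfl⟩ : ∃ k, m = l₁.length + (k + 1) := ⟨m - l₁.length - 1, by omega⟩
    rw [getElem?_append_right (by omega), Nat.add_sub_cancel_left, getElem?_cons_succ] at h
    exact absurd (mem_of_getElem? h) h₂

def shelfDeck (g : α → Bool) (l : List α) : List α :=
  l.filter g ++ (l.filter (!g ·)).reverse

theorem getElem?_shelfDeck_eq_some_iff (g : α → Bool) {l₁ l₂ : List α} {a : α} (h₁ : a ∉ l₁)
    (h₂ : a ∉ l₂) (m : ℕ) :
    (shelfDeck g (l₁ ++ a :: l₂))[m]? = some a ↔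
      if g a then m = l₁.countP g else m + l₁.countP (!g ·) + 1 = l₁.length + l₂.length + 1 := by
  have hlen₁ := l₁.length_eq_countP_add_countP g
  have hlen₂ := l₂.length_eq_countP_add_countP g
  simp only [countP_eq_length_filter, Bool.decide_eq_false, Bool.not_eq_true] at hlen₁ hlen₂ ⊢
  cases hg : g a
  · have hdeck : shelfDeck g (l₁ ++ a :: l₂) =
        (l₁.filter g ++ l₂.filter g ++ (l₂.filter (!g ·)).reverse) ++
          a :: (l₁.filter (!g ·)).reverse := by
      simp [shelfDeck, filter_append, hg]
    rw [hdeck, getElem?_append_cons_eq_some_iff (by simp [h₁, h₂]) (by simp [h₁])]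
    simp only [append_assoc, length_append, length_reverse, Bool.false_eq_true, ↓reduceIte,
      Nat.add_right_cancel_iff]
    omega
  · have hdeck : shelfDeck g (l₁ ++ a :: l₂) = l₁.filter g ++ a :: (l₂.filter g ++
        ((l₁ ++ a :: l₂).filter (!g ·)).reverse) := by
      simp [shelfDeck, filter_append, hg]
    rw [hdeck, getElem?_append_cons_eq_some_iff (by simp [h₁]) (by simp [h₂, hg])]
    simp

end List

open Finset in
theorem card_filter_apply_eq_and_card_filter_eq {α : Type*} [Fintype α] [DecidableEq α]
    {s : Finset α} {p : α} (hp : p ∉ s) (b : Bool) (t : ℕ) :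
    #{f : α → Bool | f p = b ∧ #{x ∈ s | f x = b} = t}
      = (#s).choose t * 2 ^ (Fintype.card α - #s - 1) := by
  have hrest : #(insert p s)ᶜ = Fintype.card α - #s - 1 := by
    rw [card_compl, card_insert_of_notMem hp]; omega
  rw [← card_powersetCard t s, ← hrest, ← card_powerset, ← card_product]
  -- `f` is determined by the points of `s` and of `(insert p s)ᶜ` that it sends to `b`.
  refine card_bij' (fun f _ => ({x ∈ s | f x = b}, {x ∈ (insert p s)ᶜ | f x = b}))
    (fun UV _ x => if x ∈ insert p (UV.1 ∪ UV.2) then b else !b) ?_ ?_ ?_ ?_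
  · intro f hf
    simp only [mem_filter, mem_univ, true_and] at hf
    simp [mem_powersetCard, hf.2, filter_subset]
  · rintro ⟨U, V⟩ hUV
    simp only [mem_product, mem_powersetCard, mem_powerset, subset_iff, mem_compl, mem_insert,
      not_or] at hUV
    simp only [mem_filter, mem_univ, true_and]
    refine ⟨by simp, ?_⟩
    rw [← hUV.1.2]
    congr 1
    ext x
    grind
  · intro f _
    funext x
    cases b <;> grind [mem_compl]
  · rintro ⟨U, V⟩ hUV
    simp only [mem_product, mem_powersetCard, mem_powerset, subset_iff, mem_compl, mem_insert,
      not_or] at hUV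
    ext x <;> grind [mem_compl]

open List

theorem shelfPile_eq_shelfDeck (n : ℕ) (f : ℕ → Bool) {k : ℕ} (hk : k ≤ n) :
    shelfPile n f k = shelfDeck f (range' (n + 1 - k) k) := by
  induction k with
  | zero => rfl
  | succ k ih =>
    rw [show n + 1 - (k + 1) = n - k by omega, range'_succ, show n - k + 1 = n + 1 - k by omega,
      shelfPile, ih (by omega)]
    cases hf : f (n - k) <;> simp [shelfDeck, hf]

theorem getElem?_shelfPile_eq_some_iff (n : ℕ) (f : ℕ → Bool) {i : ℕ} (hi1 : 1 ≤ i) (hin : i ≤ n)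
    (m : ℕ) :
    (shelfPile n f n)[m]? = some i ↔
      if f i then m = (range' 1 (i - 1)).countP f
      else m + (range' 1 (i - 1)).countP (!f ·) + 1 = n := by
  have hsplit := range'_append (s := 1) (m := i - 1) (n := n - i + 1) (step := 1)
  rw [range'_succ, show 1 + 1 * (i - 1) = i by omega, show i - 1 + (n - i + 1) = n by omega]
    at hsplit
  rw [shelfPile_eq_shelfDeck n f le_rfl, Nat.add_sub_cancel_left, ← hsplit,
    getElem?_shelfDeck_eq_some_iff f (by simp [mem_range'_1]; omega) (by simp [mem_range'_1]),
    length_range', length_range', show i - 1 + (n - i) + 1 = n by omega]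

theorem countP_range'_eq_card_filter {n : ℕ} (F : Fin n → Bool) (p : Fin n) (b : Bool) :
    (range' 1 p).countP (fun c => (if h : c - 1 < n then F ⟨c - 1, h⟩ else false) == b)
      = #{x ∈ Finset.Iio p | F x = b} := by
  rw [countP_eq_length_filter, ← toFinset_card_of_nodup ((nodup_range' ..).filter _), eq_comm]
  refine Finset.card_nbij (· + 1) (fun x hx => ?_) (fun x _ y _ h => by grind) (fun c hc => ?_)
  · simp only [Finset.coe_filter, Finset.mem_Iio, Set.mem_ofPred_eq] at hx
    simpa [mem_range'_1, Nat.add_comm 1, hx.1] using hx.2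
  · simp only [toFinset_filter, beq_iff_eq, Finset.coe_filter, mem_toFinset, mem_range'_1,
      Set.mem_ofPred_eq] at hc
    exact ⟨⟨c - 1, by omega⟩, by grind⟩

theorem card_filter_shelfPile_getElem?_eq_some {n i j : ℕ} (hi1 : 1 ≤ i) (hin : i ≤ n)
    (hj1 : 1 ≤ j) (hjn : j ≤ n) :
    #{f : Fin n → Bool |
        (shelfPile n (fun c => if h : c - 1 < n then f ⟨c - 1, h⟩ else false) n)[j - 1]? = some i}
      = ((i - 1).choose (j - 1) + (i - 1).choose (n - j)) * 2 ^ (n - i) := by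
  set p : Fin n := ⟨i - 1, by omega⟩
  have hposition : ∀ f : Fin n → Bool,
      (shelfPile n (fun c => if h : c - 1 < n then f ⟨c - 1, h⟩ else false) n)[j - 1]? = some i ↔
        (f p = true ∧ #{x ∈ Finset.Iio p | f x = true} = j - 1) ∨
          (f p = false ∧ #{x ∈ Finset.Iio p | f x = false} = n - j) := by
    intro f
    have htop := countP_range'_eq_card_filter f p true
    have hbot := countP_range'_eq_card_filter f p false
    have hfi : (if h : i - 1 < n then f ⟨i - 1, h⟩ else false) = f p := dif_pos _
    have hpv : (p : ℕ) = i - 1 := rfl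
    simp only [beq_true, beq_false, hpv] at htop hbot
    rw [getElem?_shelfPile_eq_some_iff _ _ hi1 hin, hfi, htop, hbot]
    cases f p <;> simp <;> omega
  have hp : p ∉ Finset.Iio p := by simp
  rw [Finset.filter_congr (fun f _ => hposition f), Finset.filter_or,
    Finset.card_union_of_disjoint (Finset.disjoint_filter.2 fun f _ h₁ h₂ => by simp [h₁.1] at h₂),
    card_filter_apply_eq_and_card_filter_eq hp, card_filter_apply_eq_and_card_filter_eq hp,
    Fin.card_Iio, Fintype.card_fin, show n - (i - 1) - 1 = n - i by omega]
  ring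

/-- For a single (fair) shelf shuffle of `n` cards, where each card is placed on
top or at the bottom of the pile independently with probability `1/2`, the
probability that card `i` lands in position `j` equals
`(C(i-1,j-1) + C(i-1,n-j))/2^i`. -/
theorem shelf_position_matrix (n i j : ℕ) (hi1 : 1 ≤ i) (hin : i ≤ n)
    (hj1 : 1 ≤ j) (hjn : j ≤ n) :
    ((Finset.univ.filter (fun f : Fin n → Bool =>
        (shelfPile n (fun c => if h : c - 1 < n then f ⟨c - 1, h⟩ else false) n)[j - 1]?
          = some i)).card : ℝ) / 2 ^ n
      = ((Nat.choose (i - 1) (j - 1) : ℝ) + Nat.choose (i - 1) (n - j)) / 2 ^ i := by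
  have h2 : (2 : ℝ) ^ n = 2 ^ (n - i) * 2 ^ i := by rw [← pow_add, Nat.sub_add_cancel hin]
  rw [card_filter_shelfPile_getElem?_eq_some hi1 hin hj1 hjn, h2]
  push_cast
  field_simp
end

section
/- The position matrix m_{i,j} = (C(i-1,j-1) + C(i-1,n-j))/2^i is doubly stochastic: for each fixed i, the sum over j from 1 to n of m_{i,j} equals 1, and for each fixed j, the sum over i from 1 to n of m_{i,j} equals 1. -/
/-!
Row sums: for `i ≤ n`, both `j ↦ C(i-1, j-1)` and `j ↦ C(i-1, n-j)` run through the whole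
`(i-1)`-st row of Pascal's triangle, so row `i` sums to `2 ⋅ 2^(i-1) / 2^i = 1`.

Column sums: by Pascal's rule the partial sums `A(N, r) = ∑_{s ≤ r} C(N, s)` satisfy
`A(N+1, r) = 2 A(N, r) - C(N, r)`, which telescopes to
`∑_{k < N} C(k, r) / 2^(k+1) = 1 - A(N, r) / 2^N`.
Column `j` is the sum of two such series, with `r = j - 1` and `r = n - j`, and by the symmetry
of binomial coefficients `A(n, j-1) + A(n, n-j) = 2^n`, so the column sums to `2 - 1 = 1`.
-/

open Finset

theorem Finset.sum_Icc_one_eq_sum_range {M : Type*} [AddCommMonoid M] (f : ℕ → M) (n : ℕ) :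
    ∑ i ∈ Icc 1 n, f i = ∑ k ∈ range n, f (k + 1) := by
  rw [← Ico_add_one_right_eq_Icc, sum_Ico_eq_sum_range, Nat.add_sub_cancel]
  simp only [add_comm]

namespace Nat

theorem sum_range_choose_of_lt {d n : ℕ} (h : d < n) : ∑ k ∈ range n, d.choose k = 2 ^ d := by
  rw [← sum_range_choose d]
  refine (sum_subset (range_subset_range.2 h) fun k _ hk => choose_eq_zero_of_lt ?_).symm
  simpa using hk

theorem sum_range_succ_choose_succ_add_choose (N r : ℕ) :
    ∑ s ∈ range (r + 1), (N + 1).choose s + N.choose r = 2 * ∑ s ∈ range (r + 1), N.choose s := by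
  induction r with
  | zero => simp
  | succ r ih =>
    rw [sum_range_succ, sum_range_succ (fun s => N.choose s), choose_succ_succ']
    omega

theorem sum_range_choose_add_sum_range_choose {n a b : ℕ} (h : a + b = n + 1) :
    ∑ s ∈ range a, n.choose s + ∑ s ∈ range b, n.choose s = 2 ^ n := by
  have reflect : ∑ s ∈ range b, n.choose s = ∑ t ∈ range b, n.choose (a + t) := by
    rw [← sum_range_reflect (fun t => n.choose (a + t)) b]
    refine sum_congr rfl fun s hs => ?_
    rw [mem_range] at hs
    rw [show a + (b - 1 - s) = n - s by omega, choose_symm (by omega)]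
  rw [reflect, ← sum_range_add (fun s => n.choose s), h, sum_range_choose]

end Nat

open Nat in
theorem sum_range_choose_div_two_pow (r N : ℕ) :
    ∑ k ∈ range N, (k.choose r : ℝ) / 2 ^ (k + 1)
      = 1 - (∑ s ∈ range (r + 1), (N.choose s : ℝ)) / 2 ^ N := by
  induction N with
  | zero => simp [sum_range_succ']
  | succ N ih =>
    have pascal : ∑ s ∈ range (r + 1), ((N + 1).choose s : ℝ)
        = 2 * ∑ s ∈ range (r + 1), (N.choose s : ℝ) - N.choose r := by
      rw [eq_sub_iff_add_eq]
      exact_mod_cast sum_range_succ_choose_succ_add_choose N r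
    rw [sum_range_succ, ih, pascal, pow_succ]
    field_simp
    ring

theorem shelf_position_matrix_doubly_stochastic_general (n : ℕ)
    (m : ℕ → ℕ → ℝ)
    (hm : ∀ i j, m i j = ((Nat.choose (i - 1) (j - 1) : ℝ) + Nat.choose (i - 1) (n - j)) / 2 ^ i) :
    (∀ i, 1 ≤ i → i ≤ n → ∑ j ∈ Finset.Icc 1 n, m i j = 1) ∧
    (∀ j, 1 ≤ j → j ≤ n → ∑ i ∈ Finset.Icc 1 n, m i j = 1) := by
  simp only [hm, sum_Icc_one_eq_sum_range, Nat.add_sub_cancel]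
  constructor
  · intro i hi hin
    have row : ∑ k ∈ range n, ((i - 1).choose k : ℝ) = 2 ^ (i - 1) := by
      exact_mod_cast Nat.sum_range_choose_of_lt (by omega)
    have row_reflected : ∑ k ∈ range n, ((i - 1).choose (n - (k + 1)) : ℝ) = 2 ^ (i - 1) := by
      rw [← row, ← sum_range_reflect (fun k => ((i - 1).choose k : ℝ)) n]
      exact sum_congr rfl fun k _ => by rw [Nat.sub_add_eq, Nat.sub_right_comm]
    rw [← sum_div, sum_add_distrib, row, row_reflected, ← two_mul, ← pow_succ',
      Nat.sub_add_cancel hi, div_self (by positivity)]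
  · intro j hj hjn
    have complementary : ∑ s ∈ range (j - 1 + 1), (n.choose s : ℝ)
        + ∑ s ∈ range (n - j + 1), (n.choose s : ℝ) = 2 ^ n := by
      exact_mod_cast Nat.sum_range_choose_add_sum_range_choose (by omega)
    rw [sum_congr rfl fun k _ => add_div _ _ _, sum_add_distrib, sum_range_choose_div_two_pow,
      sum_range_choose_div_two_pow]
    field_simp
    linarith

/-- The position matrix `m i j = (C(i-1,j-1) + C(i-1,n-j))/2^i` of the single
shelf shuffle is doubly stochastic: all row sums and all column sums equal `1`. -/
theorem shelf_position_matrix_doubly_stochastic (n : ℕ) (hn : 1 ≤ n)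
    (m : ℕ → ℕ → ℝ)
    (hm : ∀ i j, m i j = ((Nat.choose (i - 1) (j - 1) : ℝ) + Nat.choose (i - 1) (n - j)) / 2 ^ i) :
    (∀ i, 1 ≤ i → i ≤ n → ∑ j ∈ Finset.Icc 1 n, m i j = 1) ∧
    (∀ j, 1 ≤ j → j ≤ n → ∑ i ∈ Finset.Icc 1 n, m i j = 1) :=
  shelf_position_matrix_doubly_stochastic_general n m hm
end

section
/- In a single shelf shuffle of n cards, the probability that card labeled i ends up in position 1 (the first card drawn from the shuffled deck) equals (1 + δ_{i,n}) / 2^i, where δ_{i,n} is 1 if i = n and 0 otherwise. -/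
lemma shelfPile_ne_nil (n : ℕ) (f : ℕ → Bool) (k : ℕ) (hk : 1 ≤ k) :
    shelfPile n f k ≠ [] := by
  obtain ⟨k, rfl⟩ : ∃ m, k = m + 1 := ⟨k - 1, by omega⟩
  rw [shelfPile]
  split <;> simp

lemma shelfPile_head (n : ℕ) (f : ℕ → Bool) :
    ∀ k, 1 ≤ k → k ≤ n → ∀ i : ℕ,
      ((shelfPile n f k).head? = some i ↔
        ((i = n ∧ ∀ c, n - k < c → c < n → f c = false) ∨
         (i < n ∧ n - k < i ∧ f i = true ∧
           ∀ c, n - k < c → c < i → f c = false))) := by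
  intro k
  induction k with
  | zero => omega
  | succ k ih =>
    intro _ hkn i
    by_cases hk0 : k = 0
    · subst hk0
      rw [shelfPile]
      have hhead : ((if f (n - 0) then (n - 0) :: shelfPile n f 0 else
          shelfPile n f 0 ++ [n - 0]).head? = some n) := by
        rw [shelfPile]; split <;> simp
      rw [hhead]
      constructor
      · intro h
        exact Or.inl ⟨(Option.some.inj h).symm, fun c hc1 hc2 => by omega⟩
      · rintro (⟨hie, -⟩ | ⟨h1, h2, -, -⟩)
        · rw [hie]
        · omega
    · have hk1 : 1 ≤ k := by omega
      have ihk := ih hk1 (by omega) i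
      rw [shelfPile]
      cases hf : f (n - k) with
      | true =>
        simp only [hf, if_true, List.head?_cons]
        constructor
        · intro h
          have hi : i = n - k := (Option.some.inj h).symm
          refine Or.inr ⟨by omega, by omega, ?_, fun c hc1 hc2 => by omega⟩
          rw [hi]; exact hf
        · rintro (⟨hie, h⟩ | ⟨h1, h2, h3, h4⟩)
          · have := h (n - k) (by omega) (by omega)
            rw [hf] at this; exact absurd this (by simp)
          · have hi : i = n - k := by
              by_contra hne
              have := h4 (n - k) (by omega) (by omega)
              rw [hf] at this; exact absurd this (by simp)
            rw [hi]
      | false =>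
        rw [if_neg (by simp [hf])]
        have hne := shelfPile_ne_nil n f k hk1
        obtain ⟨a, l, hl⟩ := List.exists_cons_of_ne_nil hne
        have happ : (shelfPile n f k ++ [n - k]).head? = (shelfPile n f k).head? := by
          rw [hl]; rfl
        rw [happ, ihk]
        constructor
        · rintro (⟨hie, h⟩ | ⟨h1, h2, h3, h4⟩)
          · refine Or.inl ⟨hie, fun c hc1 hc2 => ?_⟩
            by_cases hc : c = n - k
            · rw [hc]; exact hf
            · exact h c (by omega) hc2
          · refine Or.inr ⟨h1, by omega, h3, fun c hc1 hc2 => ?_⟩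
            by_cases hc : c = n - k
            · rw [hc]; exact hf
            · exact h4 c (by omega) hc2
        · rintro (⟨hie, h⟩ | ⟨h1, h2, h3, h4⟩)
          · exact Or.inl ⟨hie, fun c hc1 hc2 => h c (by omega) hc2⟩
          · have hne' : i ≠ n - k := by
              intro he; rw [he, hf] at h3; exact absurd h3 (by simp)
            exact Or.inr ⟨h1, by omega, h3, fun c hc1 hc2 => h4 c (by omega) hc2⟩

lemma card_prefix (n m : ℕ) (hm : m ≤ n) (v : ℕ → Bool) :
    (Finset.univ.filter (fun f : Fin n → Bool =>
      ∀ j : Fin n, (j : ℕ) < m → f j = v j)).card = 2 ^ (n - m) := by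
  have hset : Finset.univ.filter (fun f : Fin n → Bool => ∀ j : Fin n, (j : ℕ) < m → f j = v j)
      = Fintype.piFinset (fun j : Fin n => if (j : ℕ) < m then {v j} else Finset.univ) := by
    ext f
    simp only [Finset.mem_filter, Finset.mem_univ, true_and, Fintype.mem_piFinset]
    constructor
    · intro h j
      split_ifs with hj
      · simp [h j hj]
      · simp
    · intro h j hj
      have := h j
      rw [if_pos hj] at this
      simpa using this
  rw [hset, Fintype.card_piFinset]
  have hcards : ∀ j : Fin n,
      (if (j : ℕ) < m then ({v j} : Finset Bool) else Finset.univ).card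
        = if (j : ℕ) < m then 1 else 2 := by
    intro j; split_ifs <;> simp
  rw [Finset.prod_congr rfl (fun j _ => hcards j), Finset.prod_ite,
    Finset.prod_const, Finset.prod_const, one_pow, one_mul]
  congr 1
  have hlt : (Finset.univ.filter (fun j : Fin n => (j : ℕ) < m)).card = m := by
    have himg : Finset.univ.filter (fun j : Fin n => (j : ℕ) < m)
        = (Finset.univ : Finset (Fin m)).map (Fin.castLEEmb hm) := by
      ext j
      simp only [Finset.mem_filter, Finset.mem_univ, true_and, Finset.mem_map,
        Fin.castLEEmb_apply]
      constructor
      · intro hj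
        exact ⟨⟨(j : ℕ), hj⟩, by ext; simp⟩
      · rintro ⟨a, rfl⟩; simpa using a.isLt
    rw [himg, Finset.card_map, Finset.card_univ, Fintype.card_fin]
  have htot := Finset.card_filter_add_card_filter_not
    (s := (Finset.univ : Finset (Fin n))) (p := fun j : Fin n => (j : ℕ) < m)
  simp only [Finset.card_univ, Fintype.card_fin] at htot
  omega

/-- In a single (fair) shelf shuffle of `n` cards, the probability that the card
labelled `i` ends up in position 1 equals `(1 + δ_{i,n})/2^i`. -/
theorem shelf_first_card (n i : ℕ) (hn : 1 ≤ n) (hi1 : 1 ≤ i) (hin : i ≤ n) :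
    ((Finset.univ.filter (fun f : Fin n → Bool =>
        (shelfPile n (fun c => if h : c - 1 < n then f ⟨c - 1, h⟩ else false) n).head?
          = some i)).card : ℝ) / 2 ^ n
      = (1 + if i = n then 1 else 0) / 2 ^ i := by
  set m : ℕ := if i = n then n - 1 else i with hm
  have hmn : m ≤ n := by rw [hm]; split <;> omega
  have hmain : ∀ f : Fin n → Bool,
      ((shelfPile n (fun c => if h : c - 1 < n then f ⟨c - 1, h⟩ else false) n).head? = some i
        ↔ ∀ j : Fin n, (j : ℕ) < m → f j = decide ((j : ℕ) = i - 1)) := by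
    intro f
    set F : ℕ → Bool := fun c => if h : c - 1 < n then f ⟨c - 1, h⟩ else false with hFdef
    have hF : ∀ (c : ℕ) (hc : c - 1 < n), F c = f ⟨c - 1, hc⟩ := by
      intro c hc; rw [hFdef]; exact dif_pos hc
    rw [shelfPile_head n F n hn le_rfl i]
    simp only [Nat.sub_self]
    constructor
    · rintro (⟨hie, h⟩ | ⟨h1, h2, h3, h4⟩) <;> intro j hj
      · -- i = n case : m = n - 1
        have hjm : (j : ℕ) < n - 1 := by
          rw [hm, if_pos hie] at hj; exact hj
        have hd : decide ((j : ℕ) = i - 1) = false := by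
          simp; omega
        rw [hd]
        have := h ((j : ℕ) + 1) (by omega) (by omega)
        rw [hF _ (by simpa using j.isLt)] at this
        simpa using this
      · -- i < n case : m = i
        have hjm : (j : ℕ) < i := by
          rw [hm, if_neg (by omega)] at hj; exact hj
        by_cases hji : (j : ℕ) = i - 1
        · have hd : decide ((j : ℕ) = i - 1) = true := by simp [hji]
          rw [hd]
          rw [hF i (by omega)] at h3
          have heq : (⟨i - 1, by omega⟩ : Fin n) = j := by ext; simp [hji]
          rw [heq] at h3; exact h3
        · have hd : decide ((j : ℕ) = i - 1) = false := by simp [hji]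
          rw [hd]
          have := h4 ((j : ℕ) + 1) (by omega) (by omega)
          rw [hF _ (by simpa using j.isLt)] at this
          simpa using this
    · intro h
      by_cases hi : i = n
      · refine Or.inl ⟨hi, fun c hc1 hc2 => ?_⟩
        have := h ⟨c - 1, by omega⟩ (by rw [hm, if_pos hi]; simp; omega)
        rw [hF c (by omega), this]
        simp; omega
      · refine Or.inr ⟨by omega, by omega, ?_, fun c hc1 hc2 => ?_⟩
        · rw [hF i (by omega)]
          have := h ⟨i - 1, by omega⟩ (by rw [hm, if_neg hi]; simp; omega)
          rw [this]; simp
        · rw [hF c (by omega)]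
          have := h ⟨c - 1, by omega⟩ (by rw [hm, if_neg hi]; simp; omega)
          rw [this]; simp; omega
  rw [Finset.filter_congr (fun f _ => by rw [hmain f] : ∀ f ∈ Finset.univ, _)]
  rw [card_prefix n m hmn (fun j => decide (j = i - 1))]
  by_cases hi : i = n
  · have hm' : m = n - 1 := by rw [hm, if_pos hi]
    rw [hm', if_pos hi]
    have h1 : n - (n - 1) = 1 := by omega
    rw [h1, hi]
    norm_num
  · rw [if_neg hi, hm, if_neg hi]
    rw [div_eq_div_iff (by positivity) (by positivity)]
    push_cast
    rw [add_zero, one_mul, ← pow_add]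
    congr 1
    omega
end

section
/- Let s_n(v) be the sequence of polynomials defined by s_0(v)=1, s_1(v)=v, and for n ≥ 2, s_n(v) = (1/2) v s_{n-1}(v) + (1/2) ∑_{k=2}^{n-1} v^{k-1} s_{n-k}(v) / 2^{k-1} + v^{n-1}/2^{n-1}. Then the generating function S(z,v) = ∑_{n≥1} s_n(v) z^n equals 2zv(2 + (1-v)z) / (4 - 4vz + (v^2 - v)z^2) as a formal power series in z. -/
/-!
With `a = v/2`, the sums `T n = ∑_{k=2}^{n-1} a^(k-1) s (n-k)` satisfy
`T (n+1) = a s (n-1) + a T n`, so subtracting `a` times the recurrence for `s n` from the one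
for `s (n+1)` eliminates them and leaves the linear recurrence
`4 s (n+3) = 4 v s (n+2) + (v - v²) s (n+1)`. Its characteristic polynomial, reversed, is the
denominator `4 - 4vz + (v² - v)z²`, and the numerator comes from `s 1 = v`, `s 2 = (v² + v)/2`.
-/

open PowerSeries Polynomial

theorem Finset.sum_Icc_two_pow_mul_succ {R : Type*} [CommSemiring R] (a : R) (f : ℕ → R)
    (n : ℕ) :
    ∑ k ∈ Finset.Icc 2 (n + 2), a ^ (k - 1) * f (n + 3 - k)
      = a * f (n + 1) + a * ∑ k ∈ Finset.Icc 2 (n + 1), a ^ (k - 1) * f (n + 2 - k) := by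
  rw [← Finset.add_sum_Ioc_eq_sum_Icc (by omega), ← Finset.Icc_add_one_left_eq_Ioc,
    ← Finset.map_add_right_Icc 2 (n + 1) 1, Finset.sum_map, Finset.mul_sum]
  congr 1
  · simp [show n + 3 - 2 = n + 1 by omega]
  · refine Finset.sum_congr rfl fun k hk => ?_
    obtain ⟨hk2, -⟩ := Finset.mem_Icc.mp hk
    rw [addRightEmbedding_apply, show k + 1 - 1 = (k - 1) + 1 by omega,
      show n + 3 - (k + 1) = n + 2 - k by omega, pow_succ]
    ring

theorem linear_recurrence_of_shelf_recurrence {R : Type*} [CommRing R] (a c : R) (s : ℕ → R)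
    (hrec : ∀ n, 2 ≤ n → s n =
      a * s (n - 1) + c * ∑ k ∈ Finset.Icc 2 (n - 1), a ^ (k - 1) * s (n - k) + a ^ (n - 1))
    (m : ℕ) :
    s (m + 3) = 2 * a * s (m + 2) + (c * a - a ^ 2) * s (m + 1) := by
  have h3 := hrec (m + 3) (by omega)
  have h2 := hrec (m + 2) (by omega)
  simp only [show m + 3 - 1 = m + 2 by omega, show m + 2 - 1 = m + 1 by omega,
    Finset.sum_Icc_two_pow_mul_succ] at h3 h2
  linear_combination h3 - a * h2

theorem PowerSeries.mk_mul_eq_of_linear_recurrence {R : Type*} [CommRing R] (a b c : R)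
    (g : ℕ → R) (hg : ∀ n, a * g (n + 2) = b * g (n + 1) + c * g n) :
    mk g * (C a - C b * X - C c * X ^ 2) = C (a * g 0) + C (a * g 1 - b * g 0) * X := by
  rw [show mk g * (C a - C b * X - C c * X ^ 2)
      = C a * mk g - C b * (mk g * X ^ 1) - C c * (mk g * X ^ 2) by ring]
  ext (_ | _ | n) <;> simp [coeff_mul_X_pow', hg]

theorem PowerSeries.mk_ite_zero_eq_X_mul {R : Type*} [Semiring R] (f : ℕ → R) :
    mk (fun n => if n = 0 then 0 else f n) = X * mk fun n => f (n + 1) := by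
  ext (_ | n) <;> simp [coeff_succ_X_mul]

theorem shelf_guessing_generating_function_general (s : ℕ → Polynomial ℚ)
    (h1 : s 1 = Polynomial.X)
    (hrec : ∀ n, 2 ≤ n → s n =
      Polynomial.C (1/2) * Polynomial.X * s (n - 1)
      + Polynomial.C (1/2) * ∑ k ∈ Finset.Icc 2 (n - 1),
          Polynomial.C (1 / 2 ^ (k - 1)) * Polynomial.X ^ (k - 1) * s (n - k)
      + Polynomial.C (1 / 2 ^ (n - 1)) * Polynomial.X ^ (n - 1)) :
    (PowerSeries.mk fun n => if n = 0 then 0 else s n)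
        * (4 - 4 * PowerSeries.C (R := Polynomial ℚ) Polynomial.X * PowerSeries.X
            + (PowerSeries.C (R := Polynomial ℚ) Polynomial.X ^ 2
                - PowerSeries.C (R := Polynomial ℚ) Polynomial.X) * PowerSeries.X ^ 2)
      = 2 * PowerSeries.X * PowerSeries.C (R := Polynomial ℚ) Polynomial.X
          * (2 + (1 - PowerSeries.C (R := Polynomial ℚ) Polynomial.X) * PowerSeries.X) := by
  set a : Polynomial ℚ := Polynomial.C (1 / 2) * Polynomial.X
  have hhalf : 2 * Polynomial.C (1 / 2 : ℚ) = 1 := by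
    rw [← map_ofNat Polynomial.C 2, ← map_mul]
    norm_num
  have hpow (j : ℕ) : Polynomial.C (1 / 2 ^ j : ℚ) * Polynomial.X ^ j = a ^ j := by
    rw [mul_pow, ← map_pow, one_div_pow]
  simp only [hpow] at hrec
  have hlin (m : ℕ) : 4 * s (m + 3)
      = 4 * Polynomial.X * s (m + 2) + (Polynomial.X - Polynomial.X ^ 2) * s (m + 1) := by
    linear_combination 4 * linear_recurrence_of_shelf_recurrence a _ s hrec m
      + (4 * Polynomial.X * s (m + 2)
        + (Polynomial.X - Polynomial.X ^ 2) * (2 * Polynomial.C (1 / 2) + 1) * s (m + 1)) * hhalf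
  have hs2 : 4 * s 2 - 4 * Polynomial.X * s 1 = 2 * Polynomial.X - 2 * Polynomial.X ^ 2 := by
    have := hrec 2 le_rfl
    norm_num at this
    rw [this, h1]
    linear_combination (2 * Polynomial.X ^ 2 + 2 * Polynomial.X) * hhalf
  have hden : (4 - 4 * PowerSeries.C (R := Polynomial ℚ) Polynomial.X * PowerSeries.X
      + (PowerSeries.C (R := Polynomial ℚ) Polynomial.X ^ 2
        - PowerSeries.C (R := Polynomial ℚ) Polynomial.X) * PowerSeries.X ^ 2)
      = PowerSeries.C 4 - PowerSeries.C (4 * Polynomial.X) * PowerSeries.X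
        - PowerSeries.C (Polynomial.X - Polynomial.X ^ 2) * PowerSeries.X ^ 2 := by
    simp only [map_sub, map_mul, map_pow, map_ofNat]
    ring
  rw [PowerSeries.mk_ite_zero_eq_X_mul, mul_assoc, hden,
    PowerSeries.mk_mul_eq_of_linear_recurrence _ _ _ (fun n => s (n + 1)) hlin, hs2, h1]
  simp only [map_sub, map_mul, map_pow, map_ofNat]
  ring

/-- Let `s n` be the probability generating polynomials of the number of correct
guesses after a single shelf shuffle, given by `s 0 = 1`, `s 1 = v` and, for `n ≥ 2`,
`s n = (1/2) v s (n-1) + (1/2) ∑_{k=2}^{n-1} v^(k-1) s (n-k) / 2^(k-1) + v^(n-1)/2^(n-1)`.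
Then `S(z,v) = ∑_{n ≥ 1} s n z^n` equals `2zv(2+(1-v)z)/(4-4vz+(v²-v)z²)` as a formal
power series in `z`, i.e. `S(z,v) · (4-4vz+(v²-v)z²) = 2zv(2+(1-v)z)` (the denominator
has invertible constant term `4`). Here `v = Polynomial.X` and `z = PowerSeries.X`. -/
theorem shelf_guessing_generating_function (s : ℕ → Polynomial ℚ)
    (h0 : s 0 = 1) (h1 : s 1 = Polynomial.X)
    (hrec : ∀ n, 2 ≤ n → s n =
      Polynomial.C (1/2) * Polynomial.X * s (n - 1)
      + Polynomial.C (1/2) * ∑ k ∈ Finset.Icc 2 (n - 1),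
          Polynomial.C (1 / 2 ^ (k - 1)) * Polynomial.X ^ (k - 1) * s (n - k)
      + Polynomial.C (1 / 2 ^ (n - 1)) * Polynomial.X ^ (n - 1)) :
    (PowerSeries.mk fun n => if n = 0 then 0 else s n)
        * (4 - 4 * PowerSeries.C (R := Polynomial ℚ) Polynomial.X * PowerSeries.X
            + (PowerSeries.C (R := Polynomial ℚ) Polynomial.X ^ 2
                - PowerSeries.C (R := Polynomial ℚ) Polynomial.X) * PowerSeries.X ^ 2)
      = 2 * PowerSeries.X * PowerSeries.C (R := Polynomial ℚ) Polynomial.X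
          * (2 + (1 - PowerSeries.C (R := Polynomial ℚ) Polynomial.X) * PowerSeries.X) :=
  shelf_guessing_generating_function_general s h1 hrec
end

section
/- Let e_n be defined by e_0 = 0, e_1 = 1, and for n ≥ 2, e_n = (1/2)(e_{n-1} + 1) + (1/2) ∑_{k=2}^{n} P(J_n = k)(e_{n-k} + k - 1), where P(J_n = k) = (1 + [k=n])/2^{k-1} for 2 ≤ k ≤ n. Then e_n = 3n/4 for all n ≥ 2. -/
/-!
By strong induction, `e j = 3j/4 + [j = 1]/4` for all `j < n`. The law of `J_n` has total mass `1`
and mean `3 - 4/2^n`, so the linear part `3j/4` alone turns the right-hand side of the recurrence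
into `3n/4 - 1/2^(n+1)`. The defect `e 1 - 3/4 = 1/4` enters through `e (n-1)` when `n = 2` and
through the atom `P(J_n = n-1) = 4/2^n` when `n ≥ 3`, and in both cases contributes exactly
`1/2^(n+1)`.
-/

open Finset

namespace ShelfShuffle

/-- `P(J_n = k)`. -/
noncomputable def cutWeight (n k : ℕ) : ℝ := (1 + if k = n then 1 else 0) / 2 ^ (k - 1)

lemma sum_Icc_two_one_div_two_pow (n : ℕ) :
    ∑ k ∈ Icc 2 (n + 1), (1 : ℝ) / 2 ^ (k - 1) = 1 - 1 / 2 ^ n := by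
  induction n with
  | zero => simp
  | succ n ih =>
    rw [sum_Icc_succ_top (by omega), ih, Nat.add_sub_cancel, pow_succ]
    field_simp
    ring

lemma sum_Icc_two_mul_one_div_two_pow (n : ℕ) :
    ∑ k ∈ Icc 2 (n + 1), (k : ℝ) / 2 ^ (k - 1) = 3 - (n + 3) / 2 ^ n := by
  induction n with
  | zero => norm_num
  | succ n ih =>
    rw [sum_Icc_succ_top (by omega), ih, Nat.add_sub_cancel, pow_succ]
    field_simp
    push_cast
    ring

lemma cutWeight_eq (n k : ℕ) :
    cutWeight n k = 1 / 2 ^ (k - 1) + if k = n then 1 / 2 ^ (n - 1) else 0 := by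
  unfold cutWeight
  split_ifs with h <;> simp [h, add_div]

lemma sum_cutWeight {n : ℕ} (hn : 2 ≤ n) : ∑ k ∈ Icc 2 n, cutWeight n k = 1 := by
  obtain ⟨m, rfl⟩ : ∃ m, n = m + 1 := ⟨n - 1, by omega⟩
  simp only [cutWeight_eq, sum_add_distrib, sum_ite_eq', mem_Icc, sum_Icc_two_one_div_two_pow,
    Nat.add_sub_cancel]
  rw [if_pos (by omega)]
  ring

lemma sum_mul_cutWeight {n : ℕ} (hn : 2 ≤ n) :
    ∑ k ∈ Icc 2 n, (k : ℝ) * cutWeight n k = 3 - 4 / 2 ^ n := by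
  obtain ⟨m, rfl⟩ : ∃ m, n = m + 1 := ⟨n - 1, by omega⟩
  simp only [cutWeight_eq, mul_add, mul_ite, mul_zero, sum_add_distrib, sum_ite_eq', mem_Icc,
    Nat.add_sub_cancel, mul_one_div]
  rw [sum_Icc_two_mul_one_div_two_pow, if_pos (by omega), pow_succ]
  push_cast
  field_simp
  ring

lemma defect_at_one {n : ℕ} (hn : 2 ≤ n) :
    (if n - 1 = 1 then 1 else 0) + ∑ k ∈ Icc 2 n, cutWeight n k * (if n - k = 1 then 1 else 0)
      = 4 / 2 ^ n := by
  obtain rfl | ⟨m, rfl⟩ : n = 2 ∨ ∃ m, n = m + 3 := by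
    by_cases h : n = 2
    exacts [Or.inl h, Or.inr ⟨n - 3, by omega⟩]
  · norm_num [cutWeight]
  · rw [if_neg (by omega), zero_add, sum_eq_single (m + 2)]
    · rw [if_pos (by omega), mul_one, cutWeight, if_neg (by omega),
        show m + 2 - 1 = m + 1 by omega, show m + 3 = m + 1 + 2 by rfl, pow_add]
      field_simp
      ring
    · intro k hk hne
      rw [if_neg (by rw [mem_Icc] at hk; omega), mul_zero]
    · intro h
      exact absurd (mem_Icc.mpr (by omega)) h

end ShelfShuffle

open ShelfShuffle in
/-- Let `e n = E(X_n)` satisfy `e 0 = 0`, `e 1 = 1` and, for `n ≥ 2`,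
`e n = (1/2)(e (n-1) + 1) + (1/2) ∑_{k=2}^{n} P(J_n = k)(e (n-k) + k - 1)` with
`P(J_n = k) = (1 + [k = n])/2^(k-1)`. Then `e n = 3n/4` for all `n ≥ 2`. -/
theorem shelf_guessing_expectation (e : ℕ → ℝ)
    (h0 : e 0 = 0) (h1 : e 1 = 1)
    (hrec : ∀ n, 2 ≤ n → e n =
      (1/2) * (e (n - 1) + 1)
      + (1/2) * ∑ k ∈ Finset.Icc 2 n,
          ((1 + if k = n then 1 else 0) / 2 ^ (k - 1)) * (e (n - k) + (k : ℝ) - 1)) :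
    ∀ n, 2 ≤ n → e n = 3 * n / 4 := by
  intro n
  induction n using Nat.strong_induction_on with
  | _ n ih =>
    intro hn
    have below : ∀ j < n, e j = 3 * j / 4 + (if j = 1 then 1 else 0) / 4 := by
      intro j hj
      rcases j with _ | _ | j
      · simp [h0]
      · norm_num [h1]
      · rw [ih _ hj (by omega), if_neg (by omega)]
        ring
    have summand : ∀ k ∈ Icc 2 n, cutWeight n k * (e (n - k) + k - 1)
        = (3 * n / 4 - 1) * cutWeight n k + 1 / 4 * (k * cutWeight n k)
          + 1 / 4 * (cutWeight n k * if n - k = 1 then 1 else 0) := by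
      intro k hk
      rw [mem_Icc] at hk
      rw [below _ (by omega), Nat.cast_sub hk.2]
      ring
    have hconv : ∑ k ∈ Icc 2 n, cutWeight n k * (e (n - k) + k - 1)
        = 3 * n / 4 - 1 + 1 / 4 * (3 - 4 / 2 ^ n)
          + 1 / 4 * (4 / 2 ^ n - if n - 1 = 1 then 1 else 0) := by
      rw [sum_congr rfl summand, sum_add_distrib, sum_add_distrib, ← mul_sum, ← mul_sum,
        ← mul_sum, sum_cutWeight hn, sum_mul_cutWeight hn, ← defect_at_one hn]
      ring
    unfold cutWeight at hconv
    rw [hrec n hn, hconv, below (n - 1) (by omega), Nat.cast_sub (by omega : 1 ≤ n)]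
    push_cast
    ring
end

section
/- Let f_n = [z^n] z^2(z^3 - 2z^2 - 8)/(8(z-1)^3) (the second factorial moment E(X_n(X_n - 1))), and let e_n = 3n/4 for n ≥ 2. Then f_n + e_n - e_n^2 = n/16 for all n ≥ 3. -/
/-!
The coefficient of `zᵏ` in `G = 1/(8(z-1)³) = -1/(8(1-z)³)` is `-(k+1)(k+2)/16`, a polynomial in
`k` that also vanishes at `k = -1, -2`. So for `n ≥ 3` the `n`-th coefficient of each of the three
terms `zʲ G` (`j = 5, 4, 2`) of the generating function is that polynomial at `n - j`, and the
variance becomes a polynomial identity in `n`.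
-/

open PowerSeries

theorem PowerSeries.inv_one_sub_X_pow_succ {K : Type*} [Field K] (d : ℕ) :
    ((1 - X : K⟦X⟧) ^ (d + 1))⁻¹ = mk fun n => ((d + n).choose d : K) :=
  (inv_eq_iff_mul_eq_one (by simp)).2 (mk_add_choose_mul_one_sub_pow_eq_one K d)

theorem inv_eight_mul_X_sub_one_pow_three {K : Type*} [Field K] :
    (8 * (X - 1 : K⟦X⟧) ^ 3)⁻¹ = (-8 : K)⁻¹ • ((1 - X : K⟦X⟧) ^ 3)⁻¹ := by
  rw [← PowerSeries.smul_inv, smul_eq_C_mul, map_neg, map_ofNat]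
  congr 1
  ring

theorem coeff_inv_eight_mul_X_sub_one_pow_three (k : ℕ) :
    coeff k (8 * (X - 1 : ℚ⟦X⟧) ^ 3)⁻¹ = -((k + 1) * (k + 2) : ℚ) / 16 := by
  rw [inv_eight_mul_X_sub_one_pow_three, coeff_smul, inv_one_sub_X_pow_succ, coeff_mk,
    Nat.cast_choose_two]
  push_cast
  ring

theorem coeff_X_pow_mul_inv_eight_mul_X_sub_one_pow_three {j n : ℕ} (h : j ≤ n + 2) :
    coeff n (X ^ j * (8 * (X - 1 : ℚ⟦X⟧) ^ 3)⁻¹) = -((n - j + 1) * (n - j + 2) : ℚ) / 16 := by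
  rw [coeff_X_pow_mul']
  split_ifs with hjn
  · rw [coeff_inv_eight_mul_X_sub_one_pow_three, Nat.cast_sub hjn]
  · obtain rfl | rfl : j = n + 1 ∨ j = n + 2 := by omega
    all_goals push_cast; ring

/-- Let `f n` be the coefficient of `zⁿ` in `z²(z³ - 2z² - 8)/(8(z-1)³)` (the second
factorial moment `E(X_n(X_n-1))`) and `e n = 3n/4` the expectation. Then the variance
`f n + e n - (e n)² = n/16` for all `n ≥ 3`. -/
theorem shelf_guessing_variance :
    ∀ n : ℕ, 3 ≤ n →
      (PowerSeries.coeff (R := ℚ) n)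
          ((PowerSeries.X ^ 2 * (PowerSeries.X ^ 3 - 2 * PowerSeries.X ^ 2 - 8))
            * (8 * (PowerSeries.X - 1) ^ 3)⁻¹)
        + 3 * n / 4 - (3 * n / 4) ^ 2 = n / 16 := by
  intro n hn
  set G := (8 * (X - 1 : ℚ⟦X⟧) ^ 3)⁻¹
  have expand : X ^ 2 * (X ^ 3 - 2 * X ^ 2 - 8) * G
      = X ^ 5 * G - (2 : ℚ) • (X ^ 4 * G) - (8 : ℚ) • (X ^ 2 * G) := by
    simp only [smul_eq_C_mul, map_ofNat]
    ring
  rw [expand, map_sub, map_sub, coeff_smul, coeff_smul,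
    coeff_X_pow_mul_inv_eight_mul_X_sub_one_pow_three (by omega),
    coeff_X_pow_mul_inv_eight_mul_X_sub_one_pow_three (by omega),
    coeff_X_pow_mul_inv_eight_mul_X_sub_one_pow_three (by omega)]
  ring
end

section
/- Let e_n(p) satisfy e_0 = 0, e_1 = 1, and for n ≥ 2 the recurrence e_n = p(e_{n-1} + 1) + (1-p) ∑_{k=2}^{n} q_k (e_{n-k} + k - 1), where q_k = p(1-p)^{k-2} for 2 ≤ k ≤ n-1 and q_n = (1-p)^{n-2}. Then for 1/2 ≤ p < 1 and n ≥ 3, e_n(p) = (1 - p + p^2) n + 3p - 1 - 2p^2. -/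
/-!
Removing the smallest jump `k = 2` from the sum defining `e (n + 1)` leaves the sum defining
`e n` shifted by one: the law of `J (n + 1)` on `{3, …, n + 1}` is `1 - p` times the law of `J n`
moved up by one, and the shift raises each summand `e (n - k) + k - 1` by exactly `1`.
Subtracting `1 - p` times the recurrence at `n` from the one at `n + 1` therefore gives
`e (n + 1) = e n + 1 - p + p ^ 2` for `n ≥ 2`, and `e 3 = 2 + p ^ 2` starts the progression.
-/

open Finset

section ShelfRecurrence

variable {R : Type*} [CommRing R] (p : R)

/-- `ℙ(J n = k)` for `2 ≤ k ≤ n`, the weight `q k` of the recurrence. -/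
def shelfJumpWeight (n k : ℕ) : R :=
  if k = n then (1 - p) ^ (n - 2) else p * (1 - p) ^ (k - 2)

def shelfJumpSum (e : ℕ → R) (n : ℕ) : R :=
  ∑ k ∈ Icc 2 n, shelfJumpWeight p n k * (e (n - k) + (k : R) - 1)

theorem sum_shelfJumpWeight {n : ℕ} (hn : 2 ≤ n) : ∑ k ∈ Icc 2 n, shelfJumpWeight p n k = 1 := by
  obtain ⟨m, rfl⟩ := Nat.exists_eq_add_of_le hn
  have hgeom : p * ∑ i ∈ range m, (1 - p) ^ i = 1 - (1 - p) ^ m := by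
    simpa using mul_neg_geom_sum (1 - p) m
  have hbelow : ∀ i ∈ range m, shelfJumpWeight p (2 + m) (2 + i) = p * (1 - p) ^ i := by
    intro i hi
    simp [shelfJumpWeight, (mem_range.1 hi).ne]
  rw [← Ico_add_one_right_eq_Icc, sum_Ico_eq_sum_range, show 2 + m + 1 - 2 = m + 1 by omega,
    sum_range_succ, sum_congr rfl hbelow, ← mul_sum, hgeom]
  simp [shelfJumpWeight]

theorem shelfJumpWeight_succ_succ {n k : ℕ} (hk : 2 ≤ k) :
    shelfJumpWeight p (n + 1) (k + 1) = (1 - p) * shelfJumpWeight p n k := by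
  unfold shelfJumpWeight
  by_cases hkn : k = n
  · subst hkn
    rw [if_pos rfl, if_pos rfl, show k + 1 - 2 = k - 2 + 1 by omega, pow_succ']
  · rw [if_neg (by omega), if_neg hkn, show k + 1 - 2 = k - 2 + 1 by omega, pow_succ']
    ring

theorem shelfJumpSum_succ (e : ℕ → R) {m : ℕ} (hm : 2 ≤ m) :
    shelfJumpSum p e (m + 1) = p * (e (m - 1) + 1) + (1 - p) * (shelfJumpSum p e m + 1) := by
  have hfirst : shelfJumpWeight p (m + 1) 2 = p := by
    simp [shelfJumpWeight, show 2 ≠ m + 1 by omega]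
  have hshift : ∀ k ∈ Icc 2 m,
      shelfJumpWeight p (m + 1) (k + 1) * (e (m + 1 - (k + 1)) + ((k + 1 : ℕ) : R) - 1)
        = (1 - p) * (shelfJumpWeight p m k * (e (m - k) + (k : R) - 1))
          + (1 - p) * shelfJumpWeight p m k := by
    intro k hk
    rw [shelfJumpWeight_succ_succ p (mem_Icc.1 hk).1, Nat.add_sub_add_right]
    push_cast
    ring
  rw [shelfJumpSum, ← add_sum_Ioc_eq_sum_Icc (by omega), ← Icc_add_one_left_eq_Ioc,
    ← map_add_right_Icc 2 m 1, sum_map]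
  simp only [addRightEmbedding_apply]
  rw [sum_congr rfl hshift, sum_add_distrib, ← mul_sum, ← mul_sum, sum_shelfJumpWeight p hm,
    hfirst, shelfJumpSum, show m + 1 - 2 = m - 1 by omega]
  push_cast
  ring

theorem shelf_expectation_succ {e : ℕ → R} {m : ℕ} (hm : 2 ≤ m)
    (hm₀ : e m = p * (e (m - 1) + 1) + (1 - p) * shelfJumpSum p e m)
    (hm₁ : e (m + 1) = p * (e m + 1) + (1 - p) * shelfJumpSum p e (m + 1)) :
    e (m + 1) = e m + (1 - p + p ^ 2) := by
  rw [shelfJumpSum_succ p e hm] at hm₁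
  linear_combination hm₁ - (1 - p) * hm₀

end ShelfRecurrence

theorem asymmetric_shelf_expectation_general (p : ℝ)
    (e : ℕ → ℝ) (h0 : e 0 = 0) (h1 : e 1 = 1)
    (hrec : ∀ n, 2 ≤ n → e n =
      p * (e (n - 1) + 1)
      + (1 - p) * ∑ k ∈ Finset.Icc 2 n,
          (if k = n then (1 - p) ^ (n - 2) else p * (1 - p) ^ (k - 2))
            * (e (n - k) + (k : ℝ) - 1)) :
    ∀ n, 3 ≤ n → e n = (1 - p + p ^ 2) * n + 3 * p - 1 - 2 * p ^ 2 := by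
  have hstep : ∀ m, 2 ≤ m → e (m + 1) = e m + (1 - p + p ^ 2) := fun m hm =>
    shelf_expectation_succ p hm (hrec m hm) (hrec (m + 1) (by omega))
  have he2 : e 2 = 1 + p := by
    have h := hrec 2 le_rfl
    simp only [Nat.sub_self, Icc_self, sum_singleton, if_pos, pow_zero, Nat.cast_ofNat] at h
    rw [h, h0, h1]
    ring
  intro n hn
  induction n, hn using Nat.le_induction with
  | base => rw [hstep 2 le_rfl, he2]; push_cast; ring
  | succ n hn ih => rw [hstep n (by omega), ih]; push_cast; ring

/-- Let `e n = E(X_n)` for the asymmetric shelf shuffle with parameter `p` satisfy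
`e 0 = 0`, `e 1 = 1` and, for `n ≥ 2`,
`e n = p(e (n-1) + 1) + (1-p) ∑_{k=2}^{n} q k (e (n-k) + k - 1)` where
`q k = p(1-p)^(k-2)` for `2 ≤ k ≤ n-1` and `q n = (1-p)^(n-2)`. Then for
`1/2 ≤ p < 1` and `n ≥ 3`, `e n = (1-p+p²)n + 3p - 1 - 2p²`. -/
theorem asymmetric_shelf_expectation (p : ℝ) (hp : 1 / 2 ≤ p) (hp1 : p < 1)
    (e : ℕ → ℝ) (h0 : e 0 = 0) (h1 : e 1 = 1)
    (hrec : ∀ n, 2 ≤ n → e n =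
      p * (e (n - 1) + 1)
      + (1 - p) * ∑ k ∈ Finset.Icc 2 n,
          (if k = n then (1 - p) ^ (n - 2) else p * (1 - p) ^ (k - 2))
            * (e (n - k) + (k : ℝ) - 1)) :
    ∀ n, 3 ≤ n → e n = (1 - p + p ^ 2) * n + 3 * p - 1 - 2 * p ^ 2 :=
  asymmetric_shelf_expectation_general p e h0 h1 hrec
end

section
/- For p ∈ [1/2, 1), the generating function S(z,v) = -zv(1 + (v-1)(p-1)z) / (zv - 1 + p v (v-1)(p-1) z^2) satisfies: the coefficient of z^n in ∂_v S(z,v)|_{v=1} equals (1-p+p^2)n + 3p - 1 - 2p^2 for n ≥ 3. -/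
/-!
Clearing the denominator, the coefficients `sₙ ∈ ℝ[v]` of `S` satisfy `s₁ = v`,
`s₂ = v² + (p-1)v(v-1)` and `sₙ₊₃ = v sₙ₊₂ + w sₙ₊₁` with `w = p(p-1)v(v-1)`. As `w(1) = 0`,
every `sₙ(1)` with `n ≥ 1` equals `1`, and differentiating the recurrence at `v = 1` gives
`s'ₙ₊₃(1) = s'ₙ₊₂(1) + 1 + p(p-1)`: the expectation grows linearly from `s'₂(1) = p + 1`.
-/

open PowerSeries

/-- `z` as a power series over polynomials in `v`. -/
noncomputable def Zp : PowerSeries (Polynomial ℝ) := PowerSeries.X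

/-- `v` as a power series over polynomials in `v`. -/
noncomputable def Vp : PowerSeries (Polynomial ℝ) := PowerSeries.C Polynomial.X

/-- A real constant as a power series over polynomials in `v`. -/
noncomputable def Cp (a : ℝ) : PowerSeries (Polynomial ℝ) := PowerSeries.C (Polynomial.C a)

namespace PowerSeries
variable {R : Type*} [CommRing R] {a b c d : R} {S : R⟦X⟧}

theorem coeff_mul_one_sub_X_sub_X_sq (n : ℕ) :
    coeff n (S * (1 - C a * X - C b * X ^ 2)) =
      coeff n S - (if 1 ≤ n then a * coeff (n - 1) S else 0)
        - (if 2 ≤ n then b * coeff (n - 2) S else 0) := by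
  rw [show S * (1 - C a * X - C b * X ^ 2) = S - C a * S * X ^ 1 - C b * S * X ^ 2 by ring]
  simp only [map_sub, coeff_mul_X_pow', coeff_C_mul]

theorem constantCoeff_of_mul_one_sub_eq
    (hS : S * (1 - C a * X - C b * X ^ 2) = C c * X + C d * X ^ 2) : constantCoeff S = 0 := by
  simpa [coeff_mul_one_sub_X_sub_X_sq, coeff_X_pow] using congrArg (coeff 0) hS

theorem coeff_one_of_mul_one_sub_eq
    (hS : S * (1 - C a * X - C b * X ^ 2) = C c * X + C d * X ^ 2) : coeff 1 S = c := by
  simpa [coeff_mul_one_sub_X_sub_X_sq, coeff_X_pow, constantCoeff_of_mul_one_sub_eq hS]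
    using congrArg (coeff 1) hS

theorem coeff_two_of_mul_one_sub_eq
    (hS : S * (1 - C a * X - C b * X ^ 2) = C c * X + C d * X ^ 2) :
    coeff 2 S = a * c + d := by
  have h := congrArg (coeff 2) hS
  simp [coeff_mul_one_sub_X_sub_X_sq, coeff_X_pow, coeff_one_of_mul_one_sub_eq hS,
    constantCoeff_of_mul_one_sub_eq hS] at h
  linear_combination h

theorem coeff_add_three_of_mul_one_sub_eq
    (hS : S * (1 - C a * X - C b * X ^ 2) = C c * X + C d * X ^ 2) (n : ℕ) :
    coeff (n + 3) S = a * coeff (n + 2) S + b * coeff (n + 1) S := by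
  have h := congrArg (coeff (n + 3)) hS
  simp [coeff_mul_one_sub_X_sub_X_sq, coeff_X_pow] at h
  linear_combination h

end PowerSeries

namespace Polynomial
variable {R : Type*} [CommRing R] {a b : R[X]} {t : ℕ → R[X]} {x : R}

theorem eval_eq_one_of_recurrence (hrec : ∀ n, t (n + 2) = a * t (n + 1) + b * t n)
    (hab : a.eval x + b.eval x = 1) (h0 : (t 0).eval x = 1) (h1 : (t 1).eval x = 1) (n : ℕ) :
    (t n).eval x = 1 := by
  induction n using Nat.twoStepInduction with
  | zero => exact h0
  | one => exact h1
  | more n ih0 ih1 => simp [hrec, ih0, ih1, hab]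

theorem eval_derivative_of_recurrence (hrec : ∀ n, t (n + 2) = a * t (n + 1) + b * t n)
    (ha : a.eval x = 1) (hb : b.eval x = 0) (h0 : (t 0).eval x = 1) (h1 : (t 1).eval x = 1)
    (n : ℕ) :
    (derivative (t (n + 1))).eval x
      = (derivative (t 1)).eval x + n * ((derivative a).eval x + (derivative b).eval x) := by
  have ht := eval_eq_one_of_recurrence hrec (by rw [ha, hb, add_zero]) h0 h1
  induction n with
  | zero => simp
  | succ n ih =>
    simp only [hrec, derivative_add, derivative_mul, eval_add, eval_mul, ht, ha, hb, ih]
    push_cast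
    ring

end Polynomial

theorem asymmetric_shelf_gf_expectation_general (p : ℝ)
    (S : PowerSeries (Polynomial ℝ))
    (hS : S * (Zp * Vp - 1 + Cp p * Vp * (Vp - 1) * Cp (p - 1) * Zp ^ 2)
        = -(Zp * (1 + (Vp - 1) * Cp (p - 1) * Zp)) * Vp) :
    ∀ n : ℕ, 3 ≤ n →
      Polynomial.eval 1 (Polynomial.derivative (PowerSeries.coeff n S))
        = (1 - p + p ^ 2) * n + 3 * p - 1 - 2 * p ^ 2 := by
  set v : Polynomial ℝ := Polynomial.X
  set w : Polynomial ℝ := Polynomial.C p * v * (v - 1) * Polynomial.C (p - 1)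
  set u : Polynomial ℝ := (v - 1) * Polynomial.C (p - 1) * v
  have hS_cleared : S * (1 - C v * X - C w * X ^ 2) = C v * X + C u * X ^ 2 := by
    simp only [Zp, Vp, Cp, w, u, map_mul, map_sub, map_one] at hS ⊢
    linear_combination -hS
  have hrec (n : ℕ) : coeff (n + 3) S = v * coeff (n + 2) S + w * coeff (n + 1) S :=
    coeff_add_three_of_mul_one_sub_eq hS_cleared n
  have h1 : coeff 1 S = v := coeff_one_of_mul_one_sub_eq hS_cleared
  have h2 : coeff 2 S = v * v + u := coeff_two_of_mul_one_sub_eq hS_cleared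
  intro n hn
  obtain ⟨m, rfl⟩ : ∃ m, n = m + 1 + 1 + 1 := ⟨n - 3, by omega⟩
  have hderiv := Polynomial.eval_derivative_of_recurrence (t := fun n ↦ coeff (n + 1) S) (x := 1) hrec
    (by simp [v]) (by simp [w, v]) (by simp [h1, v]) (by simp [h2, u, v]) (m + 1)
  simp only [h2, w, u, v] at hderiv
  rw [hderiv]
  simp [Polynomial.derivative_mul]
  ring

/-- For `p ∈ [1/2, 1)`, the generating function
`S(z,v) = -zv(1 + (v-1)(p-1)z)/(zv - 1 + pv(v-1)(p-1)z²)` (characterized by clearing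
the denominator, whose constant term `-1` is invertible) satisfies: the coefficient of
`zⁿ` in `∂_v S(z,v)|_{v=1}` equals `(1-p+p²)n + 3p - 1 - 2p²` for `n ≥ 3`. -/
theorem asymmetric_shelf_gf_expectation (p : ℝ) (hp : 1 / 2 ≤ p) (hp1 : p < 1)
    (S : PowerSeries (Polynomial ℝ))
    (hS : S * (Zp * Vp - 1 + Cp p * Vp * (Vp - 1) * Cp (p - 1) * Zp ^ 2)
        = -(Zp * (1 + (Vp - 1) * Cp (p - 1) * Zp)) * Vp) :
    ∀ n : ℕ, 3 ≤ n →
      Polynomial.eval 1 (Polynomial.derivative (PowerSeries.coeff n S))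
        = (1 - p + p ^ 2) * n + 3 * p - 1 - 2 * p ^ 2 :=
  asymmetric_shelf_gf_expectation_general p S hS
end

section
/- Let s_n(v,w) be defined by s_0 = 1, s_1 = w, and for n ≥ 2, s_n(v,w) = (1/2) v s_{n-1}(v,w) + (1/2) ∑_{k=2}^{n-1} w^{k-1} s_{n-k}(v,w)/2^{k-1} + w^{n-1}/2^{n-1}. Then S(z,v,w) = ∑_{n≥1} s_n(v,w) z^n = 2zw(2 + (1-w)z) / (4 + w(v-1)z^2 - 2z(v+w)) as a formal power series in z. -/
open PowerSeries

/-- `z` as a power series over polynomials in `v = X 0` and `w = X 1`. -/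
noncomputable def Zq : PowerSeries (MvPolynomial (Fin 2) ℚ) := PowerSeries.X

/-- `v` as a power series over polynomials in `v, w`. -/
noncomputable def Vq : PowerSeries (MvPolynomial (Fin 2) ℚ) := PowerSeries.C (MvPolynomial.X 0)

/-- `w` as a power series over polynomials in `v, w`. -/
noncomputable def Wq : PowerSeries (MvPolynomial (Fin 2) ℚ) := PowerSeries.C (MvPolynomial.X 1)

/-!
The sum in the recurrence convolves `s` with the geometric sequence `(w/2)^k`. Subtracting
`w/2` times the recurrence at `n + 2` from the one at `n + 3` telescopes that convolution
away, leaving the three-term recurrence `4 s (n+3) = 2(v+w) s (n+2) + w(1-v) s (n+1)`.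
Its characteristic polynomial is the denominator `4 - 2(v+w)z + w(v-1)z²`, so multiplying
`S` by it leaves a polynomial of degree two, read off from `s 1 = w` and `2 s 2 = vw + w`.
-/

section Recurrence

variable {R : Type*} [CommRing R]

theorem sum_Icc_pow_mul_shift (x : R) (g : ℕ → R) (n : ℕ) :
    ∑ k ∈ Finset.Icc 2 (n + 2), x ^ (k - 1) * g (n + 3 - k)
      = x * g (n + 1) + x * ∑ k ∈ Finset.Icc 2 (n + 1), x ^ (k - 1) * g (n + 2 - k) := by
  rw [Finset.Icc_eq_cons_Ioc (by omega), Finset.sum_cons, ← Finset.Icc_add_one_left_eq_Ioc,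
    ← Finset.map_add_right_Icc 2 (n + 1) 1, Finset.sum_map, Finset.mul_sum]
  congr 1
  · simp
  refine Finset.sum_congr rfl fun k hk => ?_
  obtain ⟨j, rfl⟩ : ∃ j, k = j + 1 := ⟨k - 1, by grind⟩
  simp only [addRightEmbedding_apply, Nat.add_sub_cancel,
    show n + 3 - (j + 1 + 1) = n + 2 - (j + 1) by omega]
  ring

theorem three_term_recurrence_of_geometric_convolution {a b x : R} {s : ℕ → R}
    (hs : ∀ n, s (n + 2) = a * s (n + 1)
        + b * ∑ k ∈ Finset.Icc 2 (n + 1), x ^ (k - 1) * s (n + 2 - k) + x ^ (n + 1))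
    (n : ℕ) :
    s (n + 3) = (a + x) * s (n + 2) + x * (b - a) * s (n + 1) := by
  have hs' := hs (n + 1)
  rw [sum_Icc_pow_mul_shift] at hs'
  linear_combination hs' - x * hs n

end Recurrence

namespace PowerSeries

variable {R : Type*} [CommRing R]

theorem coeff_add_two_mul_quadratic (φ : R⟦X⟧) (a b c : R) (n : ℕ) :
    coeff (n + 2) (φ * (C a + C b * X + C c * X ^ 2))
      = coeff (n + 2) φ * a + coeff (n + 1) φ * b + coeff n φ * c := by
  simp only [mul_add, ← mul_assoc, map_add, coeff_mul_C, coeff_mul_X_pow, coeff_succ_mul_X]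

theorem mk_mul_quadratic_of_recurrence {a b c : R} {f : ℕ → R} (h0 : f 0 = 0)
    (hf : ∀ n, a * f (n + 3) + b * f (n + 2) + c * f (n + 1) = 0) :
    mk f * (C a + C b * X + C c * X ^ 2) = C (a * f 1) * X + C (a * f 2 + b * f 1) * X ^ 2 := by
  refine ext fun n => ?_
  rw [(coeff n).map_add, coeff_C_mul, coeff_C_mul, coeff_X, coeff_X_pow]
  rcases n with _ | _ | _ | n
  · simp [h0]
  · simp only [mul_add, ← mul_assoc, map_add, coeff_mul_C, coeff_succ_mul_X, coeff_mul_X_pow',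
      coeff_mk, h0]
    simp [mul_comm]
  · rw [coeff_add_two_mul_quadratic]
    simp [h0, mul_comm]
  · rw [coeff_add_two_mul_quadratic]
    simp only [add_assoc, Nat.reduceAdd, coeff_mk, Nat.reduceEqDiff, ↓reduceIte, mul_zero,
      add_zero]
    linear_combination hf n

end PowerSeries

theorem shelf_denominator_eq :
    4 + Wq * (Vq - 1) * Zq ^ 2 - 2 * Zq * (Vq + Wq)
      = C 4 + C (-2 * (MvPolynomial.X 0 + MvPolynomial.X 1)) * X
        + C (MvPolynomial.X 1 * (MvPolynomial.X 0 - 1)) * X ^ 2 := by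
  simp only [Wq, Vq, Zq, map_mul, map_add, map_sub, map_neg, map_one, map_ofNat]
  ring

theorem shelf_numerator_eq :
    2 * Zq * Wq * (2 + (1 - Wq) * Zq)
      = C (4 * MvPolynomial.X 1) * X
        + C (2 * MvPolynomial.X 1 * (1 - MvPolynomial.X 1)) * X ^ 2 := by
  simp only [Wq, Zq, map_mul, map_sub, map_one, map_ofNat]
  ring

theorem shelf_refined_generating_function_general (s : ℕ → MvPolynomial (Fin 2) ℚ)
    (h1 : s 1 = MvPolynomial.X 1)
    (hrec : ∀ n, 2 ≤ n → s n =
      MvPolynomial.C (1/2) * MvPolynomial.X 0 * s (n - 1)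
      + MvPolynomial.C (1/2) * ∑ k ∈ Finset.Icc 2 (n - 1),
          MvPolynomial.C (1 / 2 ^ (k - 1)) * (MvPolynomial.X 1) ^ (k - 1) * s (n - k)
      + MvPolynomial.C (1 / 2 ^ (n - 1)) * (MvPolynomial.X 1) ^ (n - 1)) :
    (PowerSeries.mk fun n => if n = 0 then 0 else s n)
        * (4 + Wq * (Vq - 1) * Zq ^ 2 - 2 * Zq * (Vq + Wq))
      = 2 * Zq * Wq * (2 + (1 - Wq) * Zq) := by
  rw [shelf_denominator_eq, shelf_numerator_eq]
  set v : MvPolynomial (Fin 2) ℚ := MvPolynomial.X 0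
  set w : MvPolynomial (Fin 2) ℚ := MvPolynomial.X 1
  set half : MvPolynomial (Fin 2) ℚ := MvPolynomial.C (1 / 2)
  have two_mul_half : 2 * half = 1 := by
    rw [← map_ofNat MvPolynomial.C, ← map_mul]; norm_num
  have hgeom (n : ℕ) : s (n + 2) = half * v * s (n + 1)
      + half * ∑ k ∈ Finset.Icc 2 (n + 1), (half * w) ^ (k - 1) * s (n + 2 - k)
      + (half * w) ^ (n + 1) := by
    simp only [half, mul_pow, ← map_pow, one_div_pow]
    exact hrec (n + 2) (by omega)
  have hs2 : s 2 = half * v * w + half * w := by simpa [h1] using hgeom 0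
  have hthree (n : ℕ) :
      4 * s (n + 3) + -2 * (v + w) * s (n + 2) + w * (v - 1) * s (n + 1) = 0 := by
    linear_combination 4 * three_term_recurrence_of_geometric_convolution hgeom n
      + (2 * (v + w) * s (n + 2) + w * (1 - v) * (2 * half + 1) * s (n + 1)) * two_mul_half
  rw [mk_mul_quadratic_of_recurrence (by simp) (by simpa using hthree)]
  simp only [one_ne_zero, OfNat.ofNat_ne_zero, if_false, h1]
  congr 3
  linear_combination 4 * hs2 + 2 * (v * w + w) * two_mul_half

/-- Let `s n = E(v^{L_n} w^{C_n})` be the joint probability generating polynomials of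
pure-luck and certified correct guesses, with `s 0 = 1`, `s 1 = w` and, for `n ≥ 2`,
`s n = (1/2) v s (n-1) + (1/2) ∑_{k=2}^{n-1} w^(k-1) s (n-k)/2^(k-1) + w^(n-1)/2^(n-1)`.
Then `S(z,v,w) = ∑_{n≥1} s n zⁿ = 2zw(2 + (1-w)z)/(4 + w(v-1)z² - 2z(v+w))` as a formal
power series in `z`, i.e. clearing the denominator (invertible constant term `4`). -/
theorem shelf_refined_generating_function (s : ℕ → MvPolynomial (Fin 2) ℚ)
    (h0 : s 0 = 1) (h1 : s 1 = MvPolynomial.X 1)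
    (hrec : ∀ n, 2 ≤ n → s n =
      MvPolynomial.C (1/2) * MvPolynomial.X 0 * s (n - 1)
      + MvPolynomial.C (1/2) * ∑ k ∈ Finset.Icc 2 (n - 1),
          MvPolynomial.C (1 / 2 ^ (k - 1)) * (MvPolynomial.X 1) ^ (k - 1) * s (n - k)
      + MvPolynomial.C (1 / 2 ^ (n - 1)) * (MvPolynomial.X 1) ^ (n - 1)) :
    (PowerSeries.mk fun n => if n = 0 then 0 else s n)
        * (4 + Wq * (Vq - 1) * Zq ^ 2 - 2 * Zq * (Vq + Wq))
      = 2 * Zq * Wq * (2 + (1 - Wq) * Zq) :=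
  shelf_refined_generating_function_general s h1 hrec
end
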